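/- Let 𝒮 ⊂ ℝⁿ be a compact connected set of positive Lebesgue measure and T a probability density on 𝒮 that is continuous and L-Lipschitz with respect to the ℓ¹-norm for some L ≥ 0. Let (𝒫^{(m)})_{m∈ℕ} be a sequence of finite partitions of 𝒮 into hyperrectangles of positive Lebesgue measure (pairwise intersections of measure zero), with m-th partition having N_m cells and maximum side length δ̄_m, and let p^{(m)} be the discretization of T over 𝒫^{(m)}. If the maximum cell diameter tends to 0 and N_m δ̄_m^{n+1} → 0 as m → ∞, then KL_D(p^{(m)}‖p^{u,(m)}) + log(1 + (n/2) N_m L δ̄_m^{n+1}) → KL(T‖U) as m → ∞, and each term of this sequence is an upper bound on KL(T‖U). -/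

import Mathlib

/-!
Cell by cell, Jensen's inequality for the convex function `x ↦ x log x` bounds the discrete
divergence by the continuous one. Conversely, averaging the ℓ¹-Lipschitz bound at `y` and at
its mirror image `a + b - y` in a cell `[a, b]` shows that `T` exceeds its mean `pᵢ / vᵢ` over the
cell by at most `cᵢ = (L/2) ∑ⱼ (bⱼ - aⱼ)`. Hence `KL(T‖U) ≤ ∑ pᵢ log ((pᵢ / vᵢ + cᵢ) λ(𝒮))`, and
concavity of `log` bounds the excess `∑ pᵢ log (1 + cᵢ vᵢ / pᵢ)` over the discrete divergence by
`log (1 + ∑ cᵢ vᵢ) ≤ log (1 + (n/2) N L δ̄ⁿ⁺¹)`. This correction tends to `0`, which squeezes the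
corrected sequence onto `KL(T‖U)`.
-/

open MeasureTheory Real Finset Filter

noncomputable section

theorem mul_log_mul_eq_add (x : ℝ) {c : ℝ} (hc : c ≠ 0) :
    x * log (x * c) = x * log x + x * log c := by
  rcases eq_or_ne x 0 with rfl | hx
  · simp
  · rw [log_mul hx hc, mul_add]

theorem continuous_mul_log_mul_const (c : ℝ) : Continuous fun t : ℝ => t * log (t * c) := by
  rcases eq_or_ne c 0 with rfl | hc
  · simpa using continuous_const
  · simp_rw [mul_log_mul_eq_add _ hc]
    exact continuous_mul_log.add (continuous_id.mul continuous_const)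

theorem integral_mul_log_integral_mul_div_le {X : Type*} [MeasurableSpace X] (μ : Measure X)
    [IsFiniteMeasure μ] {f : X → ℝ} (hf₀ : 0 ≤ᵐ[μ] f) (hf : Integrable f μ) {c : ℝ} (hc : 0 < c)
    (hflog : Integrable (fun x => f x * log (f x * c)) μ) :
    (∫ x, f x ∂μ) * log ((∫ x, f x ∂μ) * c / μ.real Set.univ)
      ≤ ∫ x, f x * log (f x * c) ∂μ := by
  rcases eq_zero_or_neZero μ with rfl | _
  · simp
  have hflog' : Integrable (fun x => f x * log (f x)) μ := by
    refine (hflog.sub (hf.mul_const (log c))).congr (ae_of_all _ fun x => ?_)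
    simp [mul_log_mul_eq_add _ hc.ne']
  have jensen := convexOn_mul_log.map_average_le continuous_mul_log.continuousOn isClosed_Ici
    hf₀ hf hflog'
  simp only [average_eq, smul_eq_mul] at jensen
  set p := ∫ x, f x ∂μ
  set v := μ.real Set.univ
  have hv : 0 < v := measureReal_univ_pos
  calc p * log (p * c / v)
      = v * (v⁻¹ * p * log (v⁻¹ * p * c)) := by field_simp
    _ = v * (v⁻¹ * p * log (v⁻¹ * p)) + p * log c := by
        rw [mul_log_mul_eq_add _ hc.ne']; field_simp
    _ ≤ v * (v⁻¹ * ∫ x, f x * log (f x) ∂μ) + p * log c := by gcongr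
    _ = ∫ x, f x * log (f x * c) ∂μ := by
        simp_rw [mul_log_mul_eq_add _ hc.ne']
        rw [integral_add hflog' (hf.mul_const _), integral_mul_const]
        field_simp
        ring

theorem integral_mul_log_mul_le_of_le {X : Type*} [MeasurableSpace X] {μ : Measure X}
    {f : X → ℝ} {c M : ℝ} (hc : 0 < c) (hf : Integrable f μ)
    (hflog : Integrable (fun x => f x * log (f x * c)) μ)
    (hbound : ∀ᵐ x ∂μ, 0 ≤ f x ∧ f x ≤ M) :
    ∫ x, f x * log (f x * c) ∂μ ≤ (∫ x, f x ∂μ) * log (M * c) := by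
  rw [← integral_mul_const]
  refine integral_mono_ae hflog (hf.mul_const _) (hbound.mono fun x ⟨hf₀, hfM⟩ => ?_)
  rcases hf₀.eq_or_lt with hx | hx
  · simp [← hx]
  · exact mul_le_mul_of_nonneg_left (log_le_log (by positivity) (by gcongr)) hx.le

theorem abs_sub_add_abs_sub_reflect_le {a b x y : ℝ} (hx : x ∈ Set.Icc a b)
    (hy : y ∈ Set.Icc a b) : |x - y| + |x - (a + b - y)| ≤ b - a := by
  obtain ⟨hax, hxb⟩ := hx
  obtain ⟨hay, hyb⟩ := hy
  rcases abs_cases (x - y) with ⟨h, _⟩ | ⟨h, _⟩ <;>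
    rcases abs_cases (x - (a + b - y)) with ⟨h', _⟩ | ⟨h', _⟩ <;> linarith

theorem preimage_const_add_sub_Icc {ι : Type*} (a b : ι → ℝ) :
    (fun y => a + b - y) ⁻¹' Set.Icc a b = Set.Icc a b := by
  rw [Set.preimage_const_sub_Icc, add_sub_cancel_right, add_sub_cancel_left]

section Reflection

variable {ι : Type*} [Fintype ι] (a b : ι → ℝ)

theorem measurePreserving_const_add_sub :
    MeasurePreserving (fun y : ι → ℝ => a + b - y) volume volume :=
  Measure.measurePreserving_sub_left volume (a + b)

theorem setIntegral_Icc_comp_const_add_sub (g : (ι → ℝ) → ℝ) :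
    ∫ y in Set.Icc a b, g (a + b - y) = ∫ y in Set.Icc a b, g y := by
  have h := (measurePreserving_const_add_sub a b).setIntegral_preimage_emb
    (MeasurableEquiv.subLeft (a + b)).measurableEmbedding g (Set.Icc a b)
  rwa [preimage_const_add_sub_Icc] at h

theorem integrableOn_Icc_comp_const_add_sub {g : (ι → ℝ) → ℝ}
    (hg : IntegrableOn g (Set.Icc a b)) : IntegrableOn (fun y => g (a + b - y)) (Set.Icc a b) := by
  have h := ((measurePreserving_const_add_sub a b).integrableOn_comp_preimage
    (MeasurableEquiv.subLeft (a + b)).measurableEmbedding).2 hg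
  rwa [preimage_const_add_sub_Icc] at h

end Reflection

def L1LipschitzOn {ι : Type*} [Fintype ι] (L : ℝ) (f : (ι → ℝ) → ℝ) (s : Set (ι → ℝ)) : Prop :=
  ∀ x ∈ s, ∀ y ∈ s, |f x - f y| ≤ L * ∑ j, |x j - y j|

theorem le_setIntegral_div_volume_add_of_l1LipschitzOn {ι : Type*} [Fintype ι] {a b : ι → ℝ}
    (hv : 0 < volume (Set.Icc a b)) {T : (ι → ℝ) → ℝ} (hT : IntegrableOn T (Set.Icc a b))
    {L : ℝ} (hL : 0 ≤ L) (hLip : L1LipschitzOn L T (Set.Icc a b)) {x : ι → ℝ}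
    (hx : x ∈ Set.Icc a b) :
    T x ≤ (∫ s in Set.Icc a b, T s) / (volume (Set.Icc a b)).toReal
      + L / 2 * ∑ j, (b j - a j) := by
  set S := ∑ j, (b j - a j)
  have hreflect : ∀ y ∈ Set.Icc a b, a + b - y ∈ Set.Icc a b := fun y hy => by
    rwa [← preimage_const_add_sub_Icc a b] at hy
  have hpoint : ∀ y ∈ Set.Icc a b, T x ≤ (T y + T (a + b - y)) / 2 + L / 2 * S := by
    intro y hy
    have h₁ := (le_abs_self _).trans (hLip x hx y hy)
    have h₂ := (le_abs_self _).trans (hLip x hx _ (hreflect y hy))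
    have hsum : ∑ j, |x j - y j| + ∑ j, |x j - (a + b - y) j| ≤ S := by
      rw [← Finset.sum_add_distrib]
      exact Finset.sum_le_sum fun j _ =>
        abs_sub_add_abs_sub_reflect_le ⟨hx.1 j, hx.2 j⟩ ⟨hy.1 j, hy.2 j⟩
    nlinarith [mul_le_mul_of_nonneg_left hsum hL]
  have hfin : volume (Set.Icc a b) < ⊤ := isCompact_Icc.measure_lt_top
  have hv' : 0 < (volume (Set.Icc a b)).toReal := ENNReal.toReal_pos hv.ne' hfin.ne
  have hTreflect := integrableOn_Icc_comp_const_add_sub a b hT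
  have hconst : IntegrableOn (fun _ => L / 2 * S) (Set.Icc a b) := integrableOn_const hfin.ne
  have havg : IntegrableOn (fun y => (T y + T (a + b - y)) / 2) (Set.Icc a b) :=
    (hT.add hTreflect).div_const 2
  have hint : ∫ _ in Set.Icc a b, T x
      ≤ ∫ y in Set.Icc a b, ((T y + T (a + b - y)) / 2 + L / 2 * S) :=
    setIntegral_mono_on (integrableOn_const hfin.ne) (havg.add hconst) measurableSet_Icc hpoint
  rw [integral_add havg hconst, integral_div, integral_add hT hTreflect,
    setIntegral_Icc_comp_const_add_sub, setIntegral_const, setIntegral_const] at hint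
  simp only [smul_eq_mul, measureReal_def] at hint
  rw [div_add' _ _ _ hv'.ne', le_div_iff₀ hv']
  linarith

theorem sum_mul_log_div_add_le {ι : Type*} [Fintype ι] {p v c : ι → ℝ} (hp : ∀ i, 0 ≤ p i)
    (hp₁ : ∑ i, p i = 1) (hv : ∀ i, 0 < v i) (hc : ∀ i, 0 ≤ c i) {t : ℝ} (ht : 0 < t) :
    ∑ i, p i * log ((p i / v i + c i) * t)
      ≤ ∑ i, p i * log (p i * t / v i) + log (1 + ∑ i, c i * v i) := by
  -- `z i = 1` when `p i = 0`, by the convention `x / 0 = 0`.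
  set z : ι → ℝ := fun i => 1 + c i * v i / p i
  have hz : ∀ i, 1 ≤ z i := fun i =>
    le_add_of_nonneg_right (div_nonneg (mul_nonneg (hc i) (hv i).le) (hp i))
  have hsplit : ∀ i, p i * log ((p i / v i + c i) * t)
      = p i * log (p i * t / v i) + p i * log (z i) := by
    intro i
    rcases (hp i).eq_or_lt with hi | hi
    · simp [← hi]
    · have hv' := (hv i).ne'
      rw [← mul_add, ← log_mul (by positivity) (by linarith [hz i])]
      congr 2
      simp only [z]
      field_simp
  have hjensen : ∑ i, p i * log (z i) ≤ log (∑ i, p i * z i) := by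
    simpa using strictConcaveOn_log_Ioi.concaveOn.le_map_sum (t := Finset.univ) (w := p)
      (p := z) (fun i _ => hp i) hp₁ (fun i _ => one_pos.trans_le (hz i))
  have hpz : ∀ i, p i * z i ≤ p i + c i * v i := by
    intro i
    rcases (hp i).eq_or_lt with hi | hi
    · simpa [← hi] using mul_nonneg (hc i) (hv i).le
    · simp only [z, mul_add, mul_one, mul_div_cancel₀ _ hi.ne', le_refl]
  have hsum_pos : 0 < ∑ i, p i * z i := by
    calc (0 : ℝ) < ∑ i, p i := by rw [hp₁]; exact one_pos
      _ ≤ ∑ i, p i * z i := Finset.sum_le_sum fun i _ => le_mul_of_one_le_right (hp i) (hz i)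
  have hsum_le : ∑ i, p i * z i ≤ 1 + ∑ i, c i * v i := by
    rw [← hp₁, ← Finset.sum_add_distrib]
    exact Finset.sum_le_sum fun i _ => hpz i
  rw [Finset.sum_congr rfl fun i _ => hsplit i, Finset.sum_add_distrib]
  linarith [log_le_log hsum_pos hsum_le]

theorem sum_mul_prod_le_card_mul_pow {ι : Type*} [Fintype ι] {x : ι → ℝ} {δ : ℝ}
    (hx₀ : ∀ j, 0 ≤ x j) (hxδ : ∀ j, x j ≤ δ) :
    (∑ j, x j) * ∏ j, x j ≤ Fintype.card ι * δ ^ (Fintype.card ι + 1) := by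
  have hprod : ∏ j, x j ≤ δ ^ Fintype.card ι := by
    calc ∏ j, x j ≤ ∏ _j : ι, δ := Finset.prod_le_prod (fun j _ => hx₀ j) (fun j _ => hxδ j)
      _ = δ ^ Fintype.card ι := by rw [Finset.prod_const, Finset.card_univ]
  rw [Finset.sum_mul]
  calc ∑ j, x j * ∏ k, x k ≤ ∑ _j : ι, δ * δ ^ Fintype.card ι :=
        Finset.sum_le_sum fun j _ => mul_le_mul (hxδ j) hprod
          (Finset.prod_nonneg fun k _ => hx₀ k) ((hx₀ j).trans (hxδ j))
    _ = Fintype.card ι * δ ^ (Fintype.card ι + 1) := by simp [pow_succ']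

theorem sum_perimeter_mul_volume_Icc_le {d ι : Type*} [Fintype d] [Fintype ι]
    {a b : ι → d → ℝ} (hab : ∀ i, a i ≤ b i) {δ : ℝ} (hδ : ∀ i j, b i j - a i j ≤ δ) {L : ℝ}
    (hL : 0 ≤ L) :
    ∑ i, L / 2 * (∑ j, (b i j - a i j)) * (volume (Set.Icc (a i) (b i))).toReal
      ≤ Fintype.card d / 2 * Fintype.card ι * L * δ ^ (Fintype.card d + 1) := by
  calc ∑ i, L / 2 * (∑ j, (b i j - a i j)) * (volume (Set.Icc (a i) (b i))).toReal
      = ∑ i, L / 2 * ((∑ j, (b i j - a i j)) * ∏ j, (b i j - a i j)) := by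
        simp only [Real.volume_Icc_pi_toReal (hab _), mul_assoc]
    _ ≤ ∑ _i : ι, L / 2 * (Fintype.card d * δ ^ (Fintype.card d + 1)) :=
        Finset.sum_le_sum fun i _ => mul_le_mul_of_nonneg_left
          (sum_mul_prod_le_card_mul_pow (fun j => sub_nonneg.2 (hab i j)) (hδ i)) (by positivity)
    _ = Fintype.card d / 2 * Fintype.card ι * L * δ ^ (Fintype.card d + 1) := by
        simp only [Finset.sum_const, Finset.card_univ, nsmul_eq_mul]
        ring

theorem setIntegral_eq_sum_of_iUnion_eq {X ι : Type*} [MeasurableSpace X] [Fintype ι]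
    {μ : Measure X} {S : Set X} {C : ι → Set X} (hC : ∀ i, NullMeasurableSet (C i) μ)
    (hcover : ⋃ i, C i = S) (hdisj : ∀ i j, i ≠ j → μ (C i ∩ C j) = 0) {f : X → ℝ}
    (hf : IntegrableOn f S μ) : ∫ x in S, f x ∂μ = ∑ i, ∫ x in C i, f x ∂μ := by
  subst hcover
  rw [integral_iUnion_ae hC hdisj hf, tsum_fintype]

theorem tendsto_add_of_le_of_le_add {ι : Type*} {l : Filter ι} {a e : ι → ℝ} {b : ℝ}
    (ha : ∀ i, a i ≤ b) (hb : ∀ i, b ≤ a i + e i) (he : Tendsto e l (nhds 0)) :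
    Tendsto (fun i => a i + e i) l (nhds b) :=
  tendsto_of_tendsto_of_tendsto_of_le_of_le tendsto_const_nhds
    (by simpa using tendsto_const_nhds.add he) hb (fun i => by linarith [ha i])

def klDivUniform {X : Type*} [MeasureSpace X] (T : X → ℝ) (S : Set X) : ℝ :=
  ∫ s in S, T s * log (T s * (volume S).toReal)

def discretizedKLDivUniform {X ι : Type*} [MeasureSpace X] [Fintype ι] (T : X → ℝ) (S : Set X)
    (C : ι → Set X) : ℝ :=
  ∑ i, (∫ s in C i, T s) * log ((∫ s in C i, T s) * (volume S).toReal / (volume (C i)).toReal)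

theorem discretizedKLDivUniform_le_klDivUniform {X ι : Type*} [MeasureSpace X] [Fintype ι]
    {S : Set X} {C : ι → Set X} (hS : volume S ≠ ⊤) (hS₀ : volume S ≠ 0)
    (hC : ∀ i, NullMeasurableSet (C i)) (hcover : ⋃ i, C i = S)
    (hdisj : ∀ i j, i ≠ j → volume (C i ∩ C j) = 0) {T : X → ℝ} (hT₀ : ∀ s ∈ S, 0 ≤ T s)
    (hT : IntegrableOn T S)
    (hTlog : IntegrableOn (fun s => T s * log (T s * (volume S).toReal)) S) :
    discretizedKLDivUniform T S C ≤ klDivUniform T S := by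
  rw [klDivUniform, setIntegral_eq_sum_of_iUnion_eq hC hcover hdisj hTlog]
  refine Finset.sum_le_sum fun i _ => ?_
  have hsub : C i ⊆ S := hcover ▸ Set.subset_iUnion C i
  have : IsFiniteMeasure (volume.restrict (C i)) :=
    isFiniteMeasure_restrict.2 (ne_top_of_le_ne_top hS (measure_mono hsub))
  have h := integral_mul_log_integral_mul_div_le (volume.restrict (C i))
    ((ae_restrict_mem₀ (hC i)).mono fun s hs => hT₀ s (hsub hs)) (hT.mono_set hsub)
    (ENNReal.toReal_pos hS₀ hS) (hTlog.mono_set hsub)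
  rwa [measureReal_restrict_apply_univ, measureReal_def] at h

theorem klDivUniform_le_discretizedKLDivUniform_add {d ι : Type*} [Fintype d] [Fintype ι]
    {S : Set (d → ℝ)} {a b : ι → d → ℝ} (hS : volume S ≠ ⊤) (hS₀ : volume S ≠ 0)
    (hbox : ∀ i, 0 < volume (Set.Icc (a i) (b i))) (hcover : ⋃ i, Set.Icc (a i) (b i) = S)
    (hdisj : ∀ i j, i ≠ j → volume (Set.Icc (a i) (b i) ∩ Set.Icc (a j) (b j)) = 0)
    {δ : ℝ} (hδ : ∀ i j, b i j - a i j ≤ δ) {T : (d → ℝ) → ℝ} (hT₀ : ∀ s ∈ S, 0 ≤ T s)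
    (hT : IntegrableOn T S) (hT₁ : ∫ s in S, T s = 1)
    (hTlog : IntegrableOn (fun s => T s * log (T s * (volume S).toReal)) S)
    {L : ℝ} (hL : 0 ≤ L) (hLip : L1LipschitzOn L T S) :
    klDivUniform T S ≤ discretizedKLDivUniform T S (fun i => Set.Icc (a i) (b i))
      + log (1 + Fintype.card d / 2 * Fintype.card ι * L * δ ^ (Fintype.card d + 1)) := by
  set C : ι → Set (d → ℝ) := fun i => Set.Icc (a i) (b i)
  set t := (volume S).toReal
  set p : ι → ℝ := fun i => ∫ s in C i, T s
  set v : ι → ℝ := fun i => (volume (C i)).toReal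
  set c : ι → ℝ := fun i => L / 2 * ∑ j, (b i j - a i j)
  have hsub : ∀ i, C i ⊆ S := fun i => hcover ▸ Set.subset_iUnion C i
  have hab : ∀ i, a i ≤ b i := fun i =>
    Set.nonempty_Icc.1 (nonempty_of_measure_ne_zero (hbox i).ne')
  have hdecomp : ∀ f : (d → ℝ) → ℝ, IntegrableOn f S → ∫ s in S, f s = ∑ i, ∫ s in C i, f s :=
    fun f hf => setIntegral_eq_sum_of_iUnion_eq (fun i => measurableSet_Icc.nullMeasurableSet)
      hcover hdisj hf
  have hp : ∀ i, 0 ≤ p i := fun i =>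
    setIntegral_nonneg measurableSet_Icc fun s hs => hT₀ s (hsub i hs)
  have hv : ∀ i, 0 < v i := fun i =>
    ENNReal.toReal_pos (hbox i).ne' isCompact_Icc.measure_lt_top.ne
  have hc : ∀ i, 0 ≤ c i := fun i =>
    mul_nonneg (by positivity) (Finset.sum_nonneg fun j _ => sub_nonneg.2 (hab i j))
  have hcell : ∀ i, ∫ s in C i, T s * log (T s * t) ≤ p i * log ((p i / v i + c i) * t) := by
    intro i
    refine integral_mul_log_mul_le_of_le (ENNReal.toReal_pos hS₀ hS) (hT.mono_set (hsub i))
      (hTlog.mono_set (hsub i)) ((ae_restrict_mem measurableSet_Icc).mono fun x hx => ?_)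
    exact ⟨hT₀ x (hsub i hx), le_setIntegral_div_volume_add_of_l1LipschitzOn (hbox i)
      (hT.mono_set (hsub i)) hL (fun x hx y hy => hLip x (hsub i hx) y (hsub i hy)) hx⟩
  calc klDivUniform T S
      = ∑ i, ∫ s in C i, T s * log (T s * t) := hdecomp _ hTlog
    _ ≤ ∑ i, p i * log ((p i / v i + c i) * t) := Finset.sum_le_sum fun i _ => hcell i
    _ ≤ discretizedKLDivUniform T S C + log (1 + ∑ i, c i * v i) :=
        sum_mul_log_div_add_le hp (by rw [← hdecomp T hT, hT₁]) hv hc (ENNReal.toReal_pos hS₀ hS)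
    _ ≤ _ := by
        gcongr
        · exact add_pos_of_pos_of_nonneg one_pos
            (Finset.sum_nonneg fun i _ => mul_nonneg (hc i) (hv i).le)
        · exact sum_perimeter_mul_volume_Icc_le hab hδ hL

theorem corrected_discretized_kl_tendsto_and_upper_bounds_general
    (n : ℕ)
    (𝒮 : Set (Fin n → ℝ))
    (hcomp : IsCompact 𝒮) (hpos : 0 < volume 𝒮)
    (T : (Fin n → ℝ) → ℝ)
    (hTcont : ContinuousOn T 𝒮)
    (hTnonneg : ∀ s ∈ 𝒮, 0 ≤ T s)
    (hTint : (∫ s in 𝒮, T s) = 1)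
    (L : ℝ) (hL : 0 ≤ L)
    (hTLip : ∀ x ∈ 𝒮, ∀ y ∈ 𝒮, |T x - T y| ≤ L * ∑ j : Fin n, |x j - y j|)
    -- the sequence of hyperrectangular partitions
    (N : ℕ → ℕ)
    (cell : (m : ℕ) → Fin (N m) → Set (Fin n → ℝ))
    (α β : (m : ℕ) → Fin (N m) → Fin n → ℝ)
    (hrect : ∀ m i, cell m i = Set.Icc (α m i) (β m i))
    (hcellpos : ∀ m i, 0 < volume (cell m i))
    (hcover : ∀ m, (⋃ i, cell m i) = 𝒮)
    (hdisj : ∀ m, ∀ i j : Fin (N m), i ≠ j → volume (cell m i ∩ cell m j) = 0)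
    -- maximum side lengths δ̄_m
    (δbar : ℕ → ℝ)
    (hδbar₁ : ∀ m i j, β m i j - α m i j ≤ δbar m)
    -- maximum cell diameter tends to 0 and N_m δ̄_m^{n+1} → 0
    (hNδ : Tendsto (fun m => (N m : ℝ) * δbar m ^ (n + 1)) atTop (nhds 0)) :
    Tendsto
      (fun m => (∑ i : Fin (N m),
          (∫ s in cell m i, T s) *
            Real.log ((∫ s in cell m i, T s) * (volume 𝒮).toReal / (volume (cell m i)).toReal))
        + Real.log (1 + (n : ℝ) / 2 * (N m : ℝ) * L * δbar m ^ (n + 1)))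
      atTop
      (nhds (∫ s in 𝒮, T s * Real.log (T s * (volume 𝒮).toReal)))
    ∧ ∀ m : ℕ,
      (∫ s in 𝒮, T s * Real.log (T s * (volume 𝒮).toReal))
        ≤ (∑ i : Fin (N m),
            (∫ s in cell m i, T s) *
              Real.log ((∫ s in cell m i, T s) * (volume 𝒮).toReal / (volume (cell m i)).toReal))
          + Real.log (1 + (n : ℝ) / 2 * (N m : ℝ) * L * δbar m ^ (n + 1)) := by
  simp only [hrect] at hcellpos hcover hdisj ⊢
  have hT : IntegrableOn T 𝒮 := hTcont.integrableOn_compact hcomp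
  have hTlog : IntegrableOn (fun s => T s * log (T s * (volume 𝒮).toReal)) 𝒮 :=
    ((continuous_mul_log_mul_const _).comp_continuousOn hTcont).integrableOn_compact hcomp
  have hlower : ∀ m, discretizedKLDivUniform T 𝒮 (fun i => Set.Icc (α m i) (β m i))
      ≤ klDivUniform T 𝒮 := fun m =>
    discretizedKLDivUniform_le_klDivUniform hcomp.measure_lt_top.ne hpos.ne'
      (fun i => measurableSet_Icc.nullMeasurableSet) (hcover m) (hdisj m) hTnonneg hT hTlog
  have hupper : ∀ m, klDivUniform T 𝒮
      ≤ discretizedKLDivUniform T 𝒮 (fun i => Set.Icc (α m i) (β m i))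
        + log (1 + (n : ℝ) / 2 * (N m : ℝ) * L * δbar m ^ (n + 1)) := fun m => by
    simpa only [Fintype.card_fin] using klDivUniform_le_discretizedKLDivUniform_add
      hcomp.measure_lt_top.ne hpos.ne' (hcellpos m) (hcover m) (hdisj m) (hδbar₁ m) hTnonneg
      hT hTint hTlog hL hTLip
  have hcorrection : Tendsto (fun m => log (1 + (n : ℝ) / 2 * (N m : ℝ) * L * δbar m ^ (n + 1)))
      atTop (nhds 0) := by
    have h : Tendsto (fun m => 1 + (n : ℝ) / 2 * (N m : ℝ) * L * δbar m ^ (n + 1)) atTop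
        (nhds (1 + (n : ℝ) / 2 * L * 0)) := by
      convert (hNδ.const_mul ((n : ℝ) / 2 * L)).const_add 1 using 2
      ring
    rw [mul_zero, add_zero] at h
    simpa [Function.comp_def] using (continuousAt_log one_ne_zero).tendsto.comp h
  exact ⟨tendsto_add_of_le_of_le_add hlower hupper hcorrection, hupper⟩

/-- convergent upper bounds: along a sequence of hyperrectangular
partitions with vanishing mesh and `N_m δ̄_m^{n+1} → 0`, the globally-corrected discrete
KL divergence to uniform converges to `KL(T‖U)` from above. -/
theorem corrected_discretized_kl_tendsto_and_upper_bounds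
    (n : ℕ)
    (𝒮 : Set (Fin n → ℝ))
    (hcomp : IsCompact 𝒮) (hconn : IsConnected 𝒮) (hpos : 0 < volume 𝒮)
    (T : (Fin n → ℝ) → ℝ)
    (hTcont : ContinuousOn T 𝒮)
    (hTnonneg : ∀ s ∈ 𝒮, 0 ≤ T s)
    (hTint : (∫ s in 𝒮, T s) = 1)
    (L : ℝ) (hL : 0 ≤ L)
    (hTLip : ∀ x ∈ 𝒮, ∀ y ∈ 𝒮, |T x - T y| ≤ L * ∑ j : Fin n, |x j - y j|)
    -- the sequence of hyperrectangular partitions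
    (N : ℕ → ℕ)
    (cell : (m : ℕ) → Fin (N m) → Set (Fin n → ℝ))
    (α β : (m : ℕ) → Fin (N m) → Fin n → ℝ)
    (hrect : ∀ m i, cell m i = Set.Icc (α m i) (β m i))
    (hcellpos : ∀ m i, 0 < volume (cell m i))
    (hcover : ∀ m, (⋃ i, cell m i) = 𝒮)
    (hdisj : ∀ m, ∀ i j : Fin (N m), i ≠ j → volume (cell m i ∩ cell m j) = 0)
    -- maximum side lengths δ̄_m
    (δbar : ℕ → ℝ)
    (hδbar₁ : ∀ m i j, β m i j - α m i j ≤ δbar m)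
    (hδbar₂ : ∀ m, ∃ i j, β m i j - α m i j = δbar m)
    -- maximum cell diameter tends to 0 and N_m δ̄_m^{n+1} → 0
    (hmesh : Tendsto (fun m => ⨆ i : Fin (N m), EMetric.diam (cell m i)) atTop (nhds 0))
    (hNδ : Tendsto (fun m => (N m : ℝ) * δbar m ^ (n + 1)) atTop (nhds 0)) :
    Tendsto
      (fun m => (∑ i : Fin (N m),
          (∫ s in cell m i, T s) *
            Real.log ((∫ s in cell m i, T s) * (volume 𝒮).toReal / (volume (cell m i)).toReal))
        + Real.log (1 + (n : ℝ) / 2 * (N m : ℝ) * L * δbar m ^ (n + 1)))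
      atTop
      (nhds (∫ s in 𝒮, T s * Real.log (T s * (volume 𝒮).toReal)))
    ∧ ∀ m : ℕ,
      (∫ s in 𝒮, T s * Real.log (T s * (volume 𝒮).toReal))
        ≤ (∑ i : Fin (N m),
            (∫ s in cell m i, T s) *
              Real.log ((∫ s in cell m i, T s) * (volume 𝒮).toReal / (volume (cell m i)).toReal))
          + Real.log (1 + (n : ℝ) / 2 * (N m : ℝ) * L * δbar m ^ (n + 1)) :=
  corrected_discretized_kl_tendsto_and_upper_bounds_general n 𝒮 hcomp hpos T hTcont hTnonneg hTint L
    hL hTLip N cell α β hrect hcellpos hcover hdisj δbar hδbar₁ hNδ
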